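/- arXiv:1404.2060 — 3 statements merged into one kernel-verified Lean document; each statement's English description precedes it below -/
import Mathlib

section
/- Consider a random walk in a random environment on ℤ^d, d ≥ 2, whose environment law 𝐏 is i.i.d. and elliptic. If condition (H)_1^c holds, i.e. 𝔼_x[T^ex_𝔥] < ∞ for all x ∈ 𝔥, then for every unit hypercube H of ℤ^d containing 0 one has 𝐄[ min_{y∈H} (Q^H_y)^{−1} ] < ∞. -/
open MeasureTheory ProbabilityTheory Filter Topology ENNReal
open scoped Classical

noncomputable section

namespace RWRE

/-- Sites of `ℤ^d`. -/
abbrev V (d : ℕ) := Fin d → ℤ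

/-- The `2d` directions: `(i, true)` is `e_i`, `(i, false)` is `-e_i`. -/
abbrev Dir (d : ℕ) := Fin d × Bool

/-- Trajectory space. -/
abbrev Traj (d : ℕ) := ℕ → V d

/-- The unit vector associated to a direction. -/
def dirVec (d : ℕ) (e : Dir d) : V d := fun i => if i = e.1 then (if e.2 then 1 else -1) else 0

/-- Probability vectors on the set of directions. -/
abbrev ProbVec (d : ℕ) := {p : Dir d → ℝ // (∀ e, 0 ≤ p e) ∧ ∑ e, p e = 1}

/-- Environments. -/
abbrev Env (d : ℕ) := V d → ProbVec d

/-- Transition probability at site `x` in direction `e`. -/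
def pmf {d : ℕ} (ω : Env d) (x : V d) (e : Dir d) : ℝ := (ω x).1 e

/-- Transition probability from `x` to `y` (zero if `y` is not a neighbour of `x`). -/
def stepProb {d : ℕ} (ω : Env d) (x y : V d) : ℝ :=
  ∑ e : Dir d, if y = x + dirVec d e then pmf ω x e else 0

/-- `P` is the family of quenched laws: `P ω x` is the law of the Markov chain started at `x`
with transition probabilities given by `ω`. -/
def IsQuenched {d : ℕ} (P : Env d → V d → Measure (Traj d)) : Prop :=
  (∀ ω x, IsProbabilityMeasure (P ω x)) ∧
  (∀ x, Measurable fun ω => P ω x) ∧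
  ∀ ω x (n : ℕ) (γ : ℕ → V d),
    (P ω x {X | ∀ k ≤ n, X k = γ k}).toReal
      = (if γ 0 = x then 1 else 0) * ∏ k ∈ Finset.range n, stepProb ω (γ k) (γ (k + 1))

/-- The annealed law `ℙ_x`. -/
def annealed {d : ℕ} (P : Env d → V d → Measure (Traj d)) (Pr : Measure (Env d)) (x : V d) :
    Measure (Traj d) := Pr.bind fun ω => P ω x

/-- The environment law is i.i.d. -/
def IsIID {d : ℕ} (Pr : Measure (Env d)) : Prop :=
  IsProbabilityMeasure Pr ∧
  iIndepFun (fun x (ω : Env d) => ω x) Pr ∧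
  ∀ x : V d, Pr.map (fun ω => ω x) = Pr.map (fun ω => ω 0)

/-- Ellipticity. -/
def Elliptic {d : ℕ} (Pr : Measure (Env d)) : Prop :=
  ∀ᵐ ω ∂Pr, ∀ x e, 0 < pmf ω x e

/-- Exit time of a set. -/
def exitTime {d : ℕ} (A : Set (V d)) (X : Traj d) : ℕ∞ :=
  ⨅ (n : ℕ) (_ : X n ∉ A), (n : ℕ∞)

/-- Hitting time of a set. -/
def hitTime {d : ℕ} (A : Set (V d)) (X : Traj d) : ℕ∞ :=
  ⨅ (n : ℕ) (_ : X n ∈ A), (n : ℕ∞)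

/-- Positive hitting time of a set. -/
def retTime {d : ℕ} (A : Set (V d)) (X : Traj d) : ℕ∞ :=
  ⨅ (n : ℕ) (_ : 1 ≤ n ∧ X n ∈ A), (n : ℕ∞)

/-- Scalar product of `ℓ ∈ ℝ^d` with a site of `ℤ^d`. -/
def dot {d : ℕ} (ℓ : Fin d → ℝ) (x : V d) : ℝ := ∑ i, ℓ i * (x i : ℝ)

/-- `ℓ` belongs to the unit sphere `S^{d-1}`. -/
def UnitVec {d : ℕ} (ℓ : Fin d → ℝ) : Prop := ∑ i, ℓ i ^ 2 = 1

/-- The walk, under the annealed law, is transient in the direction `ℓ`. -/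
def Transient {d : ℕ} (P : Env d → V d → Measure (Traj d)) (Pr : Measure (Env d))
    (ℓ : Fin d → ℝ) : Prop :=
  annealed P Pr 0 {X | Tendsto (fun n => dot ℓ (X n)) atTop atTop} = 1

/-- The trajectory rescaled to `ℝ^d`. -/
def toR {d : ℕ} (x : V d) : Fin d → ℝ := fun i => (x i : ℝ)

/-- The unit hypercube based at `x`. -/
def cube {d : ℕ} (x : V d) : Set (V d) := {y | ∀ i, y i = x i ∨ y i = x i + 1}

/-- The corners of the unit hypercube based at `0`, as a finite set. -/
def cubePts (d : ℕ) : Finset (V d) :=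
  Finset.univ.image fun s : Fin d → Bool => (fun i => if s i then 1 else 0 : V d)

/-- The (outer) boundary of a set of sites. -/
def bdry {d : ℕ} (A : Set (V d)) : Set (V d) :=
  {z | z ∉ A ∧ ∃ w ∈ A, ∑ i, |z i - w i| = 1}

/-- The boundary points adjacent to `y`. -/
def bdryAt {d : ℕ} (y : V d) (A : Set (V d)) : Set (V d) :=
  {z | z ∈ bdry A ∧ ∑ i, |z i - y i| = 1}

/-- `Q^C_y`: the largest transition probability leading out of `C` from `y`. -/
def Qmax {d : ℕ} (ω : Env d) (C : Set (V d)) (y : V d) : ℝ :=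
  ⨆ e : Dir d, if y + dirVec d e ∈ bdryAt y C then pmf ω y e else 0

/-- The event that the walk exits `C` through a neighbour of `y` before returning to `x`. -/
def exitVia {d : ℕ} (C : Set (V d)) (x y : V d) : Set (Traj d) :=
  {X | ∃ n : ℕ, X n ∈ bdryAt y C ∧ (∀ m < n, X m ∉ bdry C) ∧ ∀ m, 1 ≤ m → m < n → X m ≠ x}

/-- `Q̃^C_{x,y}`: the quenched probability, starting from `x`, of exiting `C` through a
neighbour of `y` before returning to `x`. -/
def Qtilde {d : ℕ} (P : Env d → V d → Measure (Traj d)) (ω : Env d) (C : Set (V d))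
    (x y : V d) : ℝ := ((P ω x) (exitVia C x y)).toReal

/-- A marked Markovian hypercube: a unit hypercube containing `0` discovered in a Markovian
fashion by revealing sites `f 0 = 0, f 1, ...` one at a time, together with marks. -/
structure MMH (d : ℕ) where
  /-- The successively revealed sites. -/
  f : ℕ → Env d → V d
  /-- The marks, indexed by the corners of the unit hypercube at `0`. -/
  mark : V d → Env d → ℝ
  /-- The base point `x₀(ω)` of the revealed hypercube. -/
  x0 : Env d → V d
  f_zero : ∀ ω, f 0 ω = 0
  f_meas : ∀ i, Measurable (f i)
  f_local : ∀ i (ω ω' : Env d), (∀ j ≤ i, ω' (f j ω) = ω (f j ω)) → f (i + 1) ω' = f (i + 1) ω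
  f_adj : ∀ i ω, i + 1 < 2 ^ d → f (i + 1) ω ∈ bdry {y | ∃ j ≤ i, f j ω = y}
  x0_cube : ∀ ω, cube (x0 ω) = {y | ∃ j < 2 ^ d, f j ω = y}
  mark_nonneg : ∀ x ω, 0 ≤ mark x ω
  mark_meas : ∀ x, Measurable (mark x)
  mark_local : ∀ x (ω ω' : Env d), (∀ y ∈ cube (x0 ω), ω' y = ω y) → mark x ω' = mark x ω

/-- Condition `(K)_α` with explicit constant `ε` (parts (1), (2), (3)). -/
def CondKE {d : ℕ} (P : Env d → V d → Measure (Traj d)) (Pr : Measure (Env d))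
    (α ε : ℝ) : Prop :=
  ∃ γ : V d → ℝ, (∀ x, 0 ≤ γ x) ∧
    (∀ x ∈ cubePts d, ∫⁻ ω, (ENNReal.ofReal (Qmax ω (cube 0) x)) ^ (-(γ x)) ∂Pr < ⊤) ∧
    ∃ H : MMH d,
      (∫⁻ ω, ∏ x ∈ cubePts d,
          (ENNReal.ofReal (Qtilde P ω (cube (H.x0 ω)) 0 (H.x0 ω + x))) ^ (-(H.mark x ω)) ∂Pr
        < ⊤) ∧
      ∀ᵐ ω ∂Pr, α + ε ≤ ∑ x ∈ cubePts d, min (γ x) (H.mark x ω)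

/-- Condition `(K)_α`. -/
def CondK {d : ℕ} (P : Env d → V d → Measure (Traj d)) (Pr : Measure (Env d)) (α : ℝ) : Prop :=
  ∃ ε > (0 : ℝ), CondKE P Pr α ε

/-- Condition `(E)_0`. -/
def CondE0 {d : ℕ} (Pr : Measure (Env d)) : Prop :=
  ∀ e : Dir d, ∃ η > (0 : ℝ), ∫⁻ ω, (ENNReal.ofReal (pmf ω 0 e)) ^ (-η) ∂Pr < ⊤

/-- The coordinates of `z ∈ ℤ^d` in the rotated frame `R`. -/
def tiltCoord {d : ℕ} (R : EuclideanSpace ℝ (Fin d) ≃ₗᵢ[ℝ] EuclideanSpace ℝ (Fin d))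
    (z : V d) : Fin d → ℝ :=
  WithLp.equiv 2 (Fin d → ℝ) (R.symm ((WithLp.equiv 2 (Fin d → ℝ)).symm fun j => (z j : ℝ)))

/-- The box `B^ℓ_{L,L',L̃}`: the image under the rotation `R` of
`(-L',L) × (-L̃,L̃)^{d-1}`, intersected with `ℤ^d`. -/
def polyBox {d : ℕ} (R : EuclideanSpace ℝ (Fin d) ≃ₗᵢ[ℝ] EuclideanSpace ℝ (Fin d))
    (L L' Lt : ℝ) : Set (V d) :=
  {z | (∀ i : Fin d, (i : ℕ) = 0 → tiltCoord R z i ∈ Set.Ioo (-L') L) ∧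
       ∀ i : Fin d, (i : ℕ) ≠ 0 → tiltCoord R z i ∈ Set.Ioo (-Lt) Lt}

/-- The first coordinate vector of `ℝ^d` as an element of Euclidean space. -/
def euc1 (d : ℕ) : EuclideanSpace ℝ (Fin d) :=
  (WithLp.equiv 2 (Fin d → ℝ)).symm fun i => if (i : ℕ) = 0 then 1 else 0

/-- The polynomial condition `(P)^ℓ_M`. -/
def CondP {d : ℕ} (P : Env d → V d → Measure (Traj d)) (Pr : Measure (Env d))
    (ℓ : Fin d → ℝ) (M : ℝ) : Prop :=
  ∃ R : EuclideanSpace ℝ (Fin d) ≃ₗᵢ[ℝ] EuclideanSpace ℝ (Fin d),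
    R (euc1 d) = (WithLp.equiv 2 (Fin d → ℝ)).symm ℓ ∧
    ∀ L : ℝ, 2 / 3 * 3 ^ (29 * d) ≤ L →
      ∃ L' ≤ 5 / 4 * L, ∃ Lt ≤ 72 * L ^ 3,
        annealed P Pr 0
          {X | ∃ n, X n ∉ polyBox R L L' Lt ∧ (∀ m < n, X m ∈ polyBox R L L' Lt) ∧
                dot ℓ (X n) < L}
          ≤ ENNReal.ofReal (L ^ (-M))

/-- The backtracking time `D = inf{n ≥ 0 : X_n·ℓ < X_0·ℓ}`. -/
def Dtime {d : ℕ} (ℓ : Fin d → ℝ) (X : Traj d) : ℕ∞ :=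
  ⨅ (n : ℕ) (_ : dot ℓ (X n) < dot ℓ (X 0)), (n : ℕ∞)

/-- The triples `(S_k, R_k, M_k)` of the regeneration structure. -/
def regenAux {d : ℕ} (ℓ : Fin d → ℝ) (a : ℝ) (X : Traj d) : ℕ → ℕ∞ × ℕ∞ × EReal
  | 0 => (0, 0, ((dot ℓ (X 0) : ℝ) : EReal))
  | k + 1 =>
    let M := (regenAux ℓ a X k).2.2
    let S : ℕ∞ := ⨅ (n : ℕ) (_ : M + (a : EReal) < ((dot ℓ (X n) : ℝ) : EReal)), (n : ℕ∞)
    let R : ℕ∞ := ⨅ (n : ℕ) (_ : (n : ℕ∞) = S), (S + Dtime ℓ fun m => X (n + m))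
    (S, R, ⨆ (n : ℕ) (_ : (n : ℕ∞) ≤ R), ((dot ℓ (X n) : ℝ) : EReal))

/-- The first regeneration time `τ₁ = S_K`. -/
def tau1 {d : ℕ} (ℓ : Fin d → ℝ) (a : ℝ) (X : Traj d) : ℕ∞ :=
  ⨅ (k : ℕ) (_ : 1 ≤ k ∧ (regenAux ℓ a X k).1 ≠ ⊤ ∧ (regenAux ℓ a X k).2.1 = ⊤),
    (regenAux ℓ a X k).1

/-- The `ℓ¹` norm on `ℤ^d`. -/
def norm1 {d : ℕ} (x : V d) : ℤ := ∑ i, |x i|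

/-- `ℙ`-expectation, under the annealed law started at `x`, of `(T^ex_𝔥)^α`. -/
def cubeExitMoment {d : ℕ} (P : Env d → V d → Measure (Traj d)) (Pr : Measure (Env d))
    (x : V d) (α : ℝ) : ℝ≥0∞ :=
  ∫⁻ X, ((exitTime (cube 0) X : ℝ≥0∞)) ^ α ∂(annealed P Pr x)

/-!
Let `r` be the largest probability, over the corners `y` of a finite set `S`, of leaving `S` in
one step from `y`. It is a sum of at most `2d` transition probabilities out of `S`, so some corner
has `Q^S_y ≥ r / (2d)`. On the other hand, from every corner the walk makes one more step inside
`S` with probability at least `1 - r`, so it stays in `S` up to time `n` with probability at least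
`(1 - r)^n`, and the quenched expected exit time is at least `(n + 1)(1 - r)^n` for every `n`,
hence at least `1 / (4r)`. Therefore `min_y (Q^S_y)⁻¹ ≤ 8d E^ω_0[T^ex_S]`. For `S = 𝔥`,
integrating over the environment gives the annealed expected exit time, which `(H)_1^c` makes
finite; any unit hypercube containing `0` is a translate of `𝔥`, and an i.i.d. environment law
is translation invariant.
-/

section Stationarity

variable {ι β : Type*} [MeasurableSpace β] {μ : Measure (ι → β)} {ν : Measure β}

lemma map_comp_injective_eq_pi (hind : iIndepFun (fun i ω => ω i) μ)
    (hident : ∀ i, μ.map (fun ω => ω i) = ν) {κ : Type*} [Fintype κ] {g : κ → ι}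
    (hg : Function.Injective g) :
    μ.map (fun ω k => ω (g k)) = Measure.pi fun _ : κ => ν := by
  rw [(hind.precomp hg).map_fun_eq_pi_map fun k => (measurable_pi_apply (g k)).aemeasurable]
  simp_rw [hident]

lemma map_comp_injective_eq_self [IsFiniteMeasure ν]
    (hind : iIndepFun (fun i ω => ω i) μ) (hident : ∀ i, μ.map (fun ω => ω i) = ν)
    {σ : ι → ι} (hσ : Function.Injective σ) :
    μ.map (fun ω i => ω (σ i)) = μ := by
  have hlim : IsProjectiveLimit μ fun J : Finset ι => Measure.pi fun _ : J => ν :=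
    fun J => map_comp_injective_eq_pi hind hident Subtype.val_injective
  refine IsProjectiveLimit.unique (fun J => ?_) hlim
  rw [Measure.map_map (by fun_prop) (by fun_prop)]
  exact map_comp_injective_eq_pi hind hident (hσ.comp Subtype.val_injective)

end Stationarity

lemma exists_inv_le_four_mul_succ_mul_pow {r : ℝ} (hr0 : 0 < r) (hr1 : r ≤ 1) :
    ∃ n : ℕ, r⁻¹ ≤ 4 * ((n + 1) * (1 - r) ^ n) := by
  set n := ⌊(2 * r)⁻¹⌋₊
  have hn : (n : ℝ) * r ≤ 1 / 2 := by
    have := Nat.floor_le (inv_nonneg.2 (by positivity : (0 : ℝ) ≤ 2 * r))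
    rw [← le_div_iff₀ hr0]
    convert this using 1
    field_simp
  have hpow : 1 / 2 ≤ (1 - r) ^ n := by
    have := one_add_mul_le_pow (a := -r) (by linarith) n
    rw [← sub_eq_add_neg] at this
    linarith
  refine ⟨n, ?_⟩
  calc r⁻¹ = 4 * ((2 * r)⁻¹ * (1 / 2)) := by field_simp; norm_num
    _ ≤ 4 * ((n + 1) * (1 - r) ^ n) := by
      gcongr
      exact (Nat.lt_floor_add_one _).le

lemma inv_ofReal_le_four_mul_iSup {r : ℝ} (hr0 : 0 ≤ r) (hr1 : r ≤ 1) :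
    (ENNReal.ofReal r)⁻¹ ≤ 4 * ⨆ n : ℕ, ((n : ℝ≥0∞) + 1) * ENNReal.ofReal ((1 - r) ^ n) := by
  rcases hr0.eq_or_lt with rfl | hr
  · have : ⨆ n : ℕ, ((n : ℝ≥0∞) + 1) = ⊤ :=
      top_unique (ENNReal.iSup_natCast ▸ iSup_mono fun n => le_self_add)
    simp [this]
  obtain ⟨n, hn⟩ := exists_inv_le_four_mul_succ_mul_pow hr hr1
  calc (ENNReal.ofReal r)⁻¹ = ENNReal.ofReal r⁻¹ := (ENNReal.ofReal_inv_of_pos hr).symm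
    _ ≤ ENNReal.ofReal (4 * ((n + 1) * (1 - r) ^ n)) := ENNReal.ofReal_le_ofReal hn
    _ = 4 * (((n : ℝ≥0∞) + 1) * ENNReal.ofReal ((1 - r) ^ n)) := by
      rw [ENNReal.ofReal_mul (by norm_num), ENNReal.ofReal_mul (by positivity)]
      norm_cast
    _ ≤ _ := by gcongr; exact le_iSup (fun n : ℕ => ((n : ℝ≥0∞) + 1) * _) n

lemma iInf_preimage_sub {G α : Type*} [AddGroup G] [CompleteLattice α] (A : Set G) (c : G)
    (f : G → α) : ⨅ y ∈ (· - c) ⁻¹' A, f y = ⨅ z ∈ A, f (z + c) := by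
  rw [← (Equiv.addRight c).iInf_comp]
  simp

section Walk

variable {d : ℕ}

lemma cube_eq_preimage_sub (c : V d) : cube c = (· - c) ⁻¹' cube 0 := by
  ext y
  simp only [cube, Set.mem_preimage, Set.mem_ofPred_eq, Pi.sub_apply, Pi.zero_apply, zero_add]
  refine forall_congr' fun i => ?_
  omega

lemma mem_bdry_preimage_sub {A : Set (V d)} {c z : V d} :
    z ∈ bdry ((· - c) ⁻¹' A) ↔ z - c ∈ bdry A := by
  simp only [bdry, Set.mem_ofPred_eq, Set.mem_preimage]
  refine and_congr Iff.rfl ⟨fun ⟨w, hw, h⟩ => ⟨w - c, hw, ?_⟩, fun ⟨w, hw, h⟩ => ⟨w + c, ?_, ?_⟩⟩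
  · simpa using h
  · simpa using hw
  · simpa [sub_sub, add_comm] using h

lemma mem_bdryAt_preimage_sub {A : Set (V d)} {c y z : V d} :
    z ∈ bdryAt y ((· - c) ⁻¹' A) ↔ z - c ∈ bdryAt (y - c) A := by
  simp [bdryAt, mem_bdry_preimage_sub]

lemma Qmax_preimage_sub (ω : Env d) (A : Set (V d)) (c z : V d) :
    Qmax ω ((· - c) ⁻¹' A) (z + c) = Qmax (fun x => ω (x + c)) A z := by
  simp only [Qmax, mem_bdryAt_preimage_sub, add_sub_cancel_right, add_right_comm z c]
  rfl

lemma IsIID.map_shift_eq {Pr : Measure (Env d)} (hiid : IsIID Pr) (c : V d) :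
    Pr.map (fun ω x => ω (x + c)) = Pr :=
  have := hiid.1
  map_comp_injective_eq_self hiid.2.1 hiid.2.2 (add_left_injective c)

lemma IsIID.lintegral_iInf_Qmax_preimage_sub {Pr : Measure (Env d)} (hiid : IsIID Pr)
    (g : ℝ → ℝ≥0∞) (A : Set (V d)) (c : V d) :
    ∫⁻ ω, ⨅ y ∈ (· - c) ⁻¹' A, g (Qmax ω ((· - c) ⁻¹' A) y) ∂Pr
      = ∫⁻ ω, ⨅ y ∈ A, g (Qmax ω A y) ∂Pr := by
  set shift := MeasurableEquiv.piCongrLeft (fun _ => ProbVec d) (Equiv.subRight c)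
  have hshift : ⇑shift = fun ω x => ω (x + c) := by
    funext ω x
    simpa using MeasurableEquiv.piCongrLeft_apply_apply (Equiv.subRight c)
      (β := fun _ => ProbVec d) ω (x + c)
  simp_rw [iInf_preimage_sub, Qmax_preimage_sub]
  conv_rhs => rw [← hiid.map_shift_eq c, ← hshift, lintegral_map_equiv]
  simp only [hshift]

section ExitProbability

variable (ω : Env d)

lemma pmf_nonneg (x : V d) (e : Dir d) : 0 ≤ pmf ω x e := (ω x).2.1 e

lemma sum_pmf (x : V d) : ∑ e, pmf ω x e = 1 := (ω x).2.2

lemma stepProb_nonneg (x y : V d) : 0 ≤ stepProb ω x y :=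
  Finset.sum_nonneg fun e _ => by split_ifs <;> simp [pmf_nonneg]

def exitProb (A : Set (V d)) (x : V d) : ℝ :=
  ∑ e, if x + dirVec d e ∈ A then 0 else pmf ω x e

lemma exitProb_nonneg (A : Set (V d)) (x : V d) : 0 ≤ exitProb ω A x :=
  Finset.sum_nonneg fun e _ => by split_ifs <;> simp [pmf_nonneg]

lemma sum_stepProb_add_exitProb (S : Finset (V d)) (x : V d) :
    ∑ y ∈ S, stepProb ω x y + exitProb ω S x = 1 := by
  have hstep : ∑ y ∈ S, stepProb ω x y = ∑ e, if x + dirVec d e ∈ S then pmf ω x e else 0 := by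
    simp only [stepProb]
    rw [Finset.sum_comm]
    exact Finset.sum_congr rfl fun e _ => Finset.sum_ite_eq' S _ _
  rw [hstep, exitProb, ← Finset.sum_add_distrib, ← sum_pmf ω x]
  refine Finset.sum_congr rfl fun e _ => ?_
  by_cases h : x + dirVec d e ∈ S <;> simp [h]

lemma sum_abs_dirVec (e : Dir d) : ∑ i, |dirVec d e i| = 1 := by
  obtain ⟨j, b⟩ := e
  rw [Finset.sum_eq_single j (fun i _ hi => by simp [dirVec, hi]) (by simp)]
  cases b <;> simp [dirVec]

lemma add_dirVec_mem_bdryAt {A : Set (V d)} {x : V d} (hx : x ∈ A) {e : Dir d}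
    (he : x + dirVec d e ∉ A) : x + dirVec d e ∈ bdryAt x A := by
  have hdist : ∑ i, |(x + dirVec d e) i - x i| = 1 := by simpa using sum_abs_dirVec e
  exact ⟨⟨he, x, hx, hdist⟩, hdist⟩

lemma exitProb_le_mul_Qmax {A : Set (V d)} {x : V d} (hx : x ∈ A) :
    exitProb ω A x ≤ 2 * d * Qmax ω A x := by
  have hbdd : BddAbove (Set.range fun e : Dir d =>
      if x + dirVec d e ∈ bdryAt x A then pmf ω x e else 0) := (Set.finite_range _).bddAbove
  have hterm : ∀ e : Dir d, (if x + dirVec d e ∈ A then 0 else pmf ω x e) ≤ Qmax ω A x := by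
    intro e
    refine le_trans ?_ (le_ciSup hbdd e)
    by_cases he : x + dirVec d e ∈ A
    · simp only [he, if_true]
      split_ifs <;> simp [pmf_nonneg]
    · simp [he, add_dirVec_mem_bdryAt hx he]
  calc exitProb ω A x ≤ ∑ _e : Dir d, Qmax ω A x := Finset.sum_le_sum fun e _ => hterm e
    _ = 2 * d * Qmax ω A x := by simp [mul_comm]

end ExitProbability

-- Clamping the index at `n` makes `pathFrom_cons_succ` hold for every `k`.
def pathFrom (x : V d) {n : ℕ} (v : Fin n → V d) : Traj d :=
  fun k => (Fin.cons x v : Fin (n + 1) → V d) ⟨min k n, by omega⟩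

@[simp] lemma pathFrom_zero (x : V d) {n : ℕ} (v : Fin n → V d) : pathFrom x v 0 = x := by
  simp [pathFrom]

lemma pathFrom_succ (x : V d) {n : ℕ} (v : Fin n → V d) (i : Fin n) :
    pathFrom x v (i + 1) = v i := by
  have : (⟨min (i + 1) n, by omega⟩ : Fin (n + 1)) = i.succ := by ext; simp
  simp only [pathFrom, this, Fin.cons_succ]

lemma pathFrom_cons_succ (x y : V d) {n : ℕ} (w : Fin n → V d) (k : ℕ) :
    pathFrom x (Fin.cons y w : Fin (n + 1) → V d) (k + 1) = pathFrom y w k := by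
  have : (⟨min (k + 1) (n + 1), by omega⟩ : Fin (n + 2)) = Fin.succ ⟨min k n, by omega⟩ := by
    ext; simp
  simp only [pathFrom, this, Fin.cons_succ]

lemma pathFrom_mem {S : Set (V d)} {x : V d} (hx : x ∈ S) {n : ℕ} {v : Fin n → V d}
    (hv : ∀ i, v i ∈ S) (k : ℕ) : pathFrom x v k ∈ S := by
  simp only [pathFrom]
  generalize (⟨min k n, _⟩ : Fin (n + 1)) = j
  cases j using Fin.cases <;> simp [hx, hv]

def pathWeight (ω : Env d) (n : ℕ) (γ : Traj d) : ℝ :=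
  ∏ k ∈ Finset.range n, stepProb ω (γ k) (γ (k + 1))

lemma pathWeight_nonneg (ω : Env d) (n : ℕ) (γ : Traj d) : 0 ≤ pathWeight ω n γ :=
  Finset.prod_nonneg fun _ _ => stepProb_nonneg ω _ _

lemma pathWeight_pathFrom_cons (ω : Env d) (x y : V d) {n : ℕ} (w : Fin n → V d) :
    pathWeight ω (n + 1) (pathFrom x (Fin.cons y w : Fin (n + 1) → V d))
      = stepProb ω x y * pathWeight ω n (pathFrom y w) := by
  simp only [pathWeight, Finset.prod_range_succ', pathFrom_cons_succ, pathFrom_zero, mul_comm]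

lemma pow_le_sum_pathWeight (ω : Env d) {S : Finset (V d)} {q : ℝ} (hq0 : 0 ≤ q)
    (hq : ∀ y ∈ S, q ≤ ∑ z ∈ S, stepProb ω y z) (n : ℕ) {x : V d} (hx : x ∈ S) :
    q ^ n ≤ ∑ v : Fin n → S, pathWeight ω n (pathFrom x fun i => (v i : V d)) := by
  induction n generalizing x with
  | zero => simp [pathWeight]
  | succ n ih =>
    rw [← (Fin.consEquiv fun _ => S).sum_comp, Fintype.sum_prod_type]
    have hcons : ∀ (y : S) (w : Fin n → S),
        (fun i => ((Fin.consEquiv (fun _ => S) (y, w) i : S) : V d))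
          = Fin.cons (y : V d) fun i => (w i : V d) :=
      fun y w => Fin.comp_cons Subtype.val y w
    simp only [hcons, pathWeight_pathFrom_cons, ← Finset.mul_sum]
    calc q ^ (n + 1) = q * q ^ n := by ring
      _ ≤ (∑ y ∈ S, stepProb ω x y) * q ^ n := by gcongr; exact hq x hx
      _ = ∑ y : S, stepProb ω x y * q ^ n := by rw [Finset.sum_mul, ← Finset.sum_coe_sort]
      _ ≤ _ := Finset.sum_le_sum fun y _ =>
          mul_le_mul_of_nonneg_left (ih y.2) (stepProb_nonneg ω x y)

lemma measurable_exitTime (A : Set (V d)) :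
    Measurable fun X : Traj d => (exitTime A X : ℝ≥0∞) := by
  simp only [exitTime, ENat.toENNReal_iInf]
  simp only [iInf_eq_if]
  exact .iInf fun n => .ite (measurable_pi_apply n (Set.to_countable A).measurableSet).compl
    measurable_const measurable_const

lemma succ_le_exitTime {A : Set (V d)} {X : Traj d} {n : ℕ} (hX : ∀ k ≤ n, X k ∈ A) :
    ((n + 1 : ℕ) : ℕ∞) ≤ exitTime A X :=
  le_iInf₂ fun m hm => by
    by_contra! h
    exact hm (hX m (Nat.lt_succ_iff.1 (by exact_mod_cast h)))

lemma succ_mul_measure_le_lintegral_exitTime (μ : Measure (Traj d)) (A : Set (V d)) (n : ℕ) :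
    ((n : ℝ≥0∞) + 1) * μ {X | ∀ k ≤ n, X k ∈ A} ≤ ∫⁻ X, (exitTime A X : ℝ≥0∞) ∂μ := by
  calc ((n : ℝ≥0∞) + 1) * μ {X | ∀ k ≤ n, X k ∈ A}
      ≤ ((n : ℝ≥0∞) + 1) * μ {X | (n : ℝ≥0∞) + 1 ≤ exitTime A X} := by
        refine mul_le_mul_right (measure_mono fun X hX => ?_) _
        exact_mod_cast ENat.toENNReal_le.2 (succ_le_exitTime hX)
    _ ≤ _ := mul_meas_ge_le_lintegral₀ (measurable_exitTime A).aemeasurable _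

section Quenched

variable {P : Env d → V d → Measure (Traj d)}

lemma IsQuenched.measure_cylinder (hP : IsQuenched P) (ω : Env d) (x : V d) {n : ℕ}
    (v : Fin n → V d) :
    P ω x {X | ∀ k ≤ n, X k = pathFrom x v k}
      = ENNReal.ofReal (pathWeight ω n (pathFrom x v)) := by
  have := hP.1 ω x
  rw [← ENNReal.ofReal_toReal (measure_ne_top _ _), hP.2.2, pathFrom_zero, if_pos rfl, one_mul]
  rfl

lemma IsQuenched.sum_ofReal_pathWeight_le (hP : IsQuenched P) (ω : Env d) {S : Finset (V d)}
    {x : V d} (hx : x ∈ S) (n : ℕ) :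
    ∑ v : Fin n → S, ENNReal.ofReal (pathWeight ω n (pathFrom x fun i => (v i : V d)))
      ≤ P ω x {X | ∀ k ≤ n, X k ∈ S} := by
  set E : (Fin n → S) → Set (Traj d) :=
    fun v => {X | ∀ k ≤ n, X k = pathFrom x (fun i => (v i : V d)) k}
  have hmeas : ∀ v, MeasurableSet (E v) := fun v => by
    simp only [E, Set.ofPred_forall]
    exact .iInter fun k => .iInter fun _ => measurable_pi_apply k (measurableSet_singleton _)
  have hdisj : Pairwise (Function.onFun Disjoint E) := fun v w hvw =>
    Set.disjoint_left.2 fun X hv hw => hvw <| funext fun i => Subtype.ext <| by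
      have hi : (i : ℕ) + 1 ≤ n := i.2
      simpa [pathFrom_succ] using (hv _ hi).symm.trans (hw _ hi)
  have hsub : ⋃ v, E v ⊆ {X | ∀ k ≤ n, X k ∈ S} := by
    simp only [Set.iUnion_subset_iff]
    intro v X hX k hk
    rw [hX k hk]
    exact pathFrom_mem (S := ↑S) (v := fun i => (v i : V d)) (Finset.mem_coe.2 hx)
      (fun i => (v i).2) k
  calc ∑ v, ENNReal.ofReal (pathWeight ω n (pathFrom x fun i => (v i : V d)))
      = ∑ v, P ω x (E v) := Finset.sum_congr rfl fun v _ => (hP.measure_cylinder ω x _).symm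
    _ = P ω x (⋃ v, E v) := by rw [measure_iUnion hdisj hmeas, tsum_fintype]
    _ ≤ _ := measure_mono hsub

lemma IsQuenched.pow_le_measure_forall_mem (hP : IsQuenched P) (ω : Env d) {S : Finset (V d)}
    {q : ℝ} (hq0 : 0 ≤ q) (hq : ∀ y ∈ S, q ≤ ∑ z ∈ S, stepProb ω y z) {x : V d} (hx : x ∈ S)
    (n : ℕ) : ENNReal.ofReal (q ^ n) ≤ P ω x {X | ∀ k ≤ n, X k ∈ S} := by
  calc ENNReal.ofReal (q ^ n)
      ≤ ENNReal.ofReal (∑ v : Fin n → S, pathWeight ω n (pathFrom x fun i => (v i : V d))) :=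
        ENNReal.ofReal_le_ofReal (pow_le_sum_pathWeight ω hq0 hq n hx)
    _ = ∑ v : Fin n → S, ENNReal.ofReal (pathWeight ω n (pathFrom x fun i => (v i : V d))) :=
        ENNReal.ofReal_sum_of_nonneg fun _ _ => pathWeight_nonneg ω n _
    _ ≤ _ := hP.sum_ofReal_pathWeight_le ω hx n

theorem IsQuenched.iInf_inv_Qmax_le_lintegral_exitTime (hP : IsQuenched P) (hd : d ≠ 0)
    (ω : Env d) {S : Finset (V d)} {x : V d} (hx : x ∈ S) :
    ⨅ y ∈ (S : Set (V d)), (ENNReal.ofReal (Qmax ω S y))⁻¹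
      ≤ 8 * d * ∫⁻ X, (exitTime S X : ℝ≥0∞) ∂(P ω x) := by
  obtain ⟨y, hyS, hy⟩ := S.exists_max_image (exitProb ω S) ⟨x, hx⟩
  set r := exitProb ω S y
  have hstep : ∀ z, ∑ w ∈ S, stepProb ω z w = 1 - exitProb ω S z := fun z =>
    eq_sub_of_add_eq (sum_stepProb_add_exitProb ω S z)
  have hr0 : 0 ≤ r := exitProb_nonneg ω _ y
  have hr1 : r ≤ 1 := by
    linarith [hstep y, Finset.sum_nonneg fun w (_ : w ∈ S) => stepProb_nonneg ω y w]
  have hexit : ⨆ n : ℕ, ((n : ℝ≥0∞) + 1) * ENNReal.ofReal ((1 - r) ^ n)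
      ≤ ∫⁻ X, (exitTime S X : ℝ≥0∞) ∂(P ω x) := by
    refine iSup_le fun n => le_trans ?_ (succ_mul_measure_le_lintegral_exitTime _ _ n)
    gcongr
    refine hP.pow_le_measure_forall_mem ω (by linarith) (fun z hz => ?_) hx n
    rw [hstep]
    linarith [hy z hz]
  have hQ : ENNReal.ofReal r ≤ 2 * d * ENNReal.ofReal (Qmax ω S y) := by
    calc ENNReal.ofReal r ≤ ENNReal.ofReal (2 * d * Qmax ω S y) :=
          ENNReal.ofReal_le_ofReal (exitProb_le_mul_Qmax ω (Finset.mem_coe.2 hyS))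
      _ = 2 * d * ENNReal.ofReal (Qmax ω S y) := by
        rw [ENNReal.ofReal_mul (by positivity)]
        norm_cast
  have h2d0 : (2 * d : ℝ≥0∞) ≠ 0 := by simpa using hd
  have h2dt : (2 * d : ℝ≥0∞) ≠ ⊤ := by finiteness
  calc ⨅ y ∈ (S : Set (V d)), (ENNReal.ofReal (Qmax ω S y))⁻¹
      ≤ (ENNReal.ofReal (Qmax ω S y))⁻¹ := iInf₂_le y hyS
    _ = 2 * d * (2 * d * ENNReal.ofReal (Qmax ω S y))⁻¹ := by
      rw [ENNReal.mul_inv (.inl h2d0) (.inl h2dt), ENNReal.mul_inv_cancel_left h2d0 h2dt]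
    _ ≤ 2 * d * (ENNReal.ofReal r)⁻¹ := by gcongr
    _ ≤ 2 * d * (4 * ∫⁻ X, (exitTime S X : ℝ≥0∞) ∂(P ω x)) := by
      gcongr
      exact (inv_ofReal_le_four_mul_iSup hr0 hr1).trans (by gcongr)
    _ = 8 * d * ∫⁻ X, (exitTime S X : ℝ≥0∞) ∂(P ω x) := by ring

end Quenched

lemma coe_cubePts : (cubePts d : Set (V d)) = cube 0 := by
  ext y
  simp only [cubePts, Finset.coe_image, Finset.coe_univ, Set.image_univ, Set.mem_range, cube,
    Set.mem_ofPred_eq, Pi.zero_apply, zero_add]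
  refine ⟨fun ⟨s, hs⟩ i => by by_cases h : s i <;> simp [← hs, h], fun hy => ?_⟩
  refine ⟨fun i => decide (y i = 1), funext fun i => ?_⟩
  rcases hy i with h | h <;> simp [h]

end Walk

theorem min_Qmax_inv_integrable_of_Hc_general
    (d : ℕ) (hd : 2 ≤ d)
    (P : Env d → V d → Measure (Traj d)) (hP : IsQuenched P)
    (Pr : Measure (Env d)) (hiid : IsIID Pr)
    (hHc : ∀ x ∈ cube (0 : V d),
      ∫⁻ X, ((exitTime (cube 0) X : ℝ≥0∞)) ∂(annealed P Pr x) < ⊤) :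
    ∀ c : V d, (0 : V d) ∈ cube c →
      ∫⁻ ω, ⨅ y ∈ cube c, (ENNReal.ofReal (Qmax ω (cube c) y))⁻¹ ∂Pr < ⊤ := by
  intro c _
  have h0 : (0 : V d) ∈ cube 0 := fun _ => Or.inl rfl
  rw [cube_eq_preimage_sub c,
    hiid.lintegral_iInf_Qmax_preimage_sub (fun q => (ENNReal.ofReal q)⁻¹), ← coe_cubePts]
  calc ∫⁻ ω, ⨅ y ∈ (cubePts d : Set (V d)), (ENNReal.ofReal (Qmax ω (cubePts d) y))⁻¹ ∂Pr
      ≤ ∫⁻ ω, 8 * d * ∫⁻ X, (exitTime (cubePts d) X : ℝ≥0∞) ∂(P ω 0) ∂Pr :=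
        lintegral_mono fun ω => hP.iInf_inv_Qmax_le_lintegral_exitTime (by omega) ω
          (Finset.mem_coe.1 (coe_cubePts ▸ h0))
    _ = 8 * d * ∫⁻ X, (exitTime (cube 0) X : ℝ≥0∞) ∂(annealed P Pr 0) := by
      rw [lintegral_const_mul' _ _ (by finiteness), coe_cubePts, annealed,
        Measure.lintegral_bind (hP.2.1 0).aemeasurable (measurable_exitTime _).aemeasurable]
    _ < ⊤ := ENNReal.mul_lt_top (by finiteness) (hHc 0 h0)

/-- If `(H)_1^c` holds, i.e. the annealed expected exit time of the unit
hypercube is finite from every corner, then for every unit hypercube `H` containing `0` we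
have `𝐄[min_{y ∈ H} (Q^H_y)⁻¹] < ∞`. -/
theorem min_Qmax_inv_integrable_of_Hc
    (d : ℕ) (hd : 2 ≤ d)
    (P : Env d → V d → Measure (Traj d)) (hP : IsQuenched P)
    (Pr : Measure (Env d)) (hiid : IsIID Pr) (hell : Elliptic Pr)
    (hHc : ∀ x ∈ cube (0 : V d),
      ∫⁻ X, ((exitTime (cube 0) X : ℝ≥0∞)) ∂(annealed P Pr x) < ⊤) :
    ∀ c : V d, (0 : V d) ∈ cube c →
      ∫⁻ ω, ⨅ y ∈ cube c, (ENNReal.ofReal (Qmax ω (cube c) y))⁻¹ ∂Pr < ⊤ :=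
  min_Qmax_inv_integrable_of_Hc_general d hd P hP Pr hiid hHc

end RWRE
end
end

section
/- Consider the random environment 𝐏^expl on ℤ^d, d ≥ 2, with parameter ε ∈ (1/(2d+1), 2d/(2d+1)). Then for every family (φ(e))_{e∈U} ∈ (0,∞)^{2d} satisfying 2Σ_{e∈U}φ(e) − sup_{e∈U}(φ(e)+φ(−e)) > 1, there exists e_0 ∈ U such that 𝐄[exp(φ(e_0) log(1/p^ω(0,e_0)))] = ∞. In particular, 𝐏^expl does not satisfy condition (E')_1. -/
open MeasureTheory ProbabilityTheory Filter Topology ENNReal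
open scoped Classical

noncomputable section

namespace RWRE

/-- The uniform probability measure on the set of directions. -/
def uniformDir (d : ℕ) : Measure (Dir d) :=
  ((Fintype.card (Dir d) : ℝ≥0∞))⁻¹ • ∑ e : Dir d, Measure.dirac e

/-- The transition vector of the example environment `𝐏^expl` with strength `ε`, as a
function of the variables `(T, i₀)`: direction `i₀` gets probability `1/T`, the remaining
"positive" directions share `1 - ε` (minus `1/T` if `i₀` is positive), and the remaining
"negative" directions share `ε` (minus `1/T` if `i₀` is negative). -/
def pexpl (d : ℕ) (ε : ℝ) (ti : ℝ × Dir d) : Dir d → ℝ := fun e =>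
  if e = ti.2 then 1 / ti.1
  else if e.2 then
    (1 - ε - (if ti.2.2 then 1 / ti.1 else 0)) / ((d : ℝ) - (if ti.2.2 then 1 else 0))
  else (ε - (if ti.2.2 then 0 else 1 / ti.1)) / ((d : ℝ) - (if ti.2.2 then 0 else 1))

/-- The law `𝐏` is the i.i.d. environment `𝐏^expl` with parameter `ε`: the common site
marginal is the law of `pexpl (T, i₀)` where `T ≥ 2d+1` a.s. with
`𝐄[T^{1/(4d)}] = ∞`, `𝐄[T^{1/(8d)}] < ∞`, and `i₀` is an independent uniform direction. -/
def IsPexpl {d : ℕ} (Pr : Measure (Env d)) (ε : ℝ) : Prop :=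
  IsIID Pr ∧
  ∃ μT : Measure ℝ, IsProbabilityMeasure μT ∧
    μT {t | 2 * (d : ℝ) + 1 ≤ t} = 1 ∧
    (∫⁻ t, ENNReal.ofReal (t ^ ((1 : ℝ) / (4 * d))) ∂μT = ⊤) ∧
    (∫⁻ t, ENNReal.ofReal (t ^ ((1 : ℝ) / (8 * d))) ∂μT < ⊤) ∧
    Pr.map (fun ω => ((ω 0).1 : Dir d → ℝ)) = (μT.prod (uniformDir d)).map (pexpl d ε)
/-- Condition `(E')_1` of Bouchet–Ramírez–Sabot: there exist positive weights `φ(e)` with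
`2 Σ_e φ(e) - sup_e (φ(e)+φ(-e)) > 1` and
`𝐄[Π_{e'≠e} p^ω(0,e')^{-φ(e')}] < ∞` for every `e`. -/
def CondE'1 {d : ℕ} (Pr : Measure (Env d)) : Prop :=
  ∃ φ : Dir d → ℝ, (∀ e, 0 < φ e) ∧
    (1 < 2 * ∑ e, φ e - ⨆ e : Dir d, (φ e + φ (e.1, !e.2))) ∧
    ∀ e : Dir d,
      ∫⁻ ω, ∏ e' ∈ Finset.univ.erase e, (ENNReal.ofReal (pmf ω 0 e')) ^ (-(φ e')) ∂Pr < ⊤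

/-! With probability `1/(2d)` the marked direction `i₀` is `e₀`, and then `p^ω(0,e₀) = 1/T`;
hence `𝐄[p^ω(0,e₀)^{-c}] ≥ 𝐄[T^c]/(2d)`, which is infinite as soon as `c ≥ 1/(4d)`.
The constraint `2 Σ φ - sup_e (φ(e)+φ(-e)) > 1` forces `Σ φ > 1/2`, so some `φ(e₀) > 1/(4d)`.
Finally every factor `p^ω(0,e')^{-φ(e')}` is at least `1`, so the product over `e' ≠ -e₀`
dominates the factor at `e₀`, and `(E')_1` fails. -/

lemma lintegral_uniformDir {d : ℕ} (f : Dir d → ℝ≥0∞) :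
    ∫⁻ e, f e ∂uniformDir d = (Fintype.card (Dir d) : ℝ≥0∞)⁻¹ * ∑ e, f e := by
  simp [uniformDir, lintegral_dirac]

lemma measurable_pexpl (d : ℕ) (ε : ℝ) : Measurable (pexpl d ε) := by
  refine measurable_from_prod_countable_left fun i => measurable_pi_lambda _ fun e => ?_
  unfold pexpl
  simp only
  split_ifs <;> fun_prop

lemma pexpl_apply_self (d : ℕ) (ε t : ℝ) (i : Dir d) : pexpl d ε (t, i) i = 1 / t := by
  simp [pexpl]

lemma pmf_le_one {d : ℕ} (ω : Env d) (x : V d) (e : Dir d) : pmf ω x e ≤ 1 :=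
  (ω x).2.2 ▸ Finset.single_le_sum (fun e _ => (ω x).2.1 e) (Finset.mem_univ e)

lemma one_le_ofReal_pmf_rpow_neg {d : ℕ} (ω : Env d) (x : V d) (e : Dir d) {c : ℝ}
    (hc : 0 ≤ c) : 1 ≤ ENNReal.ofReal (pmf ω x e) ^ (-c) := by
  rw [ENNReal.rpow_neg, ENNReal.one_le_inv]
  exact ENNReal.rpow_le_one (ENNReal.ofReal_le_one.mpr (pmf_le_one ω x e)) hc

lemma ofReal_one_div_rpow_neg {t : ℝ} (ht : 0 < t) (c : ℝ) :
    ENNReal.ofReal (1 / t) ^ (-c) = ENNReal.ofReal (t ^ c) := by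
  rw [one_div, ENNReal.ofReal_inv_of_pos ht, ENNReal.inv_rpow, ENNReal.rpow_neg, inv_inv,
    ENNReal.ofReal_rpow_of_pos ht]

lemma lintegral_comp_site_zero_eq {d : ℕ} {Pr : Measure (Env d)} {ε : ℝ} {μT : Measure ℝ}
    (hmap : Pr.map (fun ω => ((ω 0).1 : Dir d → ℝ)) = (μT.prod (uniformDir d)).map (pexpl d ε))
    {g : (Dir d → ℝ) → ℝ≥0∞} (hg : Measurable g) :
    ∫⁻ ω, g (ω 0).1 ∂Pr
      = ∫⁻ t, (Fintype.card (Dir d) : ℝ≥0∞)⁻¹ * ∑ i, g (pexpl d ε (t, i)) ∂μT := by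
  have hcoord : Measurable fun ω : Env d => ((ω 0).1 : Dir d → ℝ) :=
    measurable_subtype_coe.comp (measurable_pi_apply 0)
  rw [← lintegral_map hg hcoord, hmap, lintegral_map hg (measurable_pexpl d ε),
    lintegral_prod (fun x => g (pexpl d ε x)) (hg.comp (measurable_pexpl d ε)).aemeasurable]
  simp only [lintegral_uniformDir]

lemma IsPexpl.lintegral_rpow_neg_eq_top {d : ℕ} {Pr : Measure (Env d)} {ε : ℝ}
    (hPr : IsPexpl Pr ε) (e₀ : Dir d) {c : ℝ} (hc : 1 / (4 * (d : ℝ)) ≤ c) :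
    ∫⁻ ω, ENNReal.ofReal (pmf ω 0 e₀) ^ (-c) ∂Pr = ⊤ := by
  obtain ⟨-, μT, hμT, hT, hTmoment, -, hmap⟩ := hPr
  set a : ℝ := 1 / (4 * d)
  set K : ℝ≥0∞ := (Fintype.card (Dir d) : ℝ≥0∞)⁻¹
  have hTlarge : ∀ᵐ t ∂μT, 1 ≤ t := by
    have hTge : ∀ᵐ t ∂μT, 2 * (d : ℝ) + 1 ≤ t :=
      (prob_compl_eq_zero_iff measurableSet_Ici).mpr hT
    filter_upwards [hTge] with t ht
    linarith [(Nat.cast_nonneg d : (0 : ℝ) ≤ d)]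
  have hbound : ∀ᵐ t ∂μT, K * ENNReal.ofReal (t ^ a)
      ≤ K * ∑ i, ENNReal.ofReal (pexpl d ε (t, i) e₀) ^ (-c) := by
    filter_upwards [hTlarge] with t ht
    calc K * ENNReal.ofReal (t ^ a) ≤ K * ENNReal.ofReal (pexpl d ε (t, e₀) e₀) ^ (-c) := by
          rw [pexpl_apply_self, ofReal_one_div_rpow_neg (by linarith)]
          gcongr
      _ ≤ _ := by
          gcongr
          exact Finset.single_le_sum (f := fun i => ENNReal.ofReal (pexpl d ε (t, i) e₀) ^ (-c))
            (fun _ _ => zero_le) (Finset.mem_univ e₀)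
  refine top_le_iff.mp ?_
  calc ⊤ = K * ∫⁻ t, ENNReal.ofReal (t ^ a) ∂μT := by
        rw [hTmoment, ENNReal.mul_top (ENNReal.inv_ne_zero.mpr (ENNReal.natCast_ne_top _))]
    _ = ∫⁻ t, K * ENNReal.ofReal (t ^ a) ∂μT := (lintegral_const_mul _ (by fun_prop)).symm
    _ ≤ _ := lintegral_mono_ae hbound
    _ = _ := (lintegral_comp_site_zero_eq hmap
      (g := fun p => ENNReal.ofReal (p e₀) ^ (-c)) (by fun_prop)).symm

lemma exists_one_div_four_mul_lt_weight {d : ℕ} (φ : Dir d → ℝ) (hφ : ∀ e, 0 < φ e)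
    (h : 1 < 2 * ∑ e, φ e - ⨆ e : Dir d, (φ e + φ (e.1, !e.2))) :
    ∃ e, 1 / (4 * (d : ℝ)) < φ e := by
  have hsup : 0 ≤ ⨆ e : Dir d, (φ e + φ (e.1, !e.2)) :=
    Real.iSup_nonneg fun e => (add_pos (hφ e) (hφ _)).le
  have huniform : ∑ _e : Dir d, 1 / (4 * (d : ℝ)) ≤ 1 / 2 := by
    rcases eq_or_ne d 0 with rfl | hd
    · simp
    · simp only [Finset.sum_const, Finset.card_univ, Fintype.card_prod, Fintype.card_fin,
        Fintype.card_bool, nsmul_eq_mul, Nat.cast_mul, Nat.cast_ofNat]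
      field_simp
      linarith
  obtain ⟨e, -, he⟩ := Finset.exists_lt_of_sum_lt (s := Finset.univ)
    (f := fun _ => 1 / (4 * (d : ℝ))) (g := φ) (by linarith)
  exact ⟨e, he⟩

lemma lintegral_rpow_neg_le_lintegral_prod_erase {d : ℕ} (Pr : Measure (Env d))
    (φ : Dir d → ℝ) (hφ : ∀ e, 0 ≤ φ e) {e e₀ : Dir d} (hne : e₀ ≠ e) :
    ∫⁻ ω, ENNReal.ofReal (pmf ω 0 e₀) ^ (-φ e₀) ∂Pr
      ≤ ∫⁻ ω, ∏ e' ∈ Finset.univ.erase e, ENNReal.ofReal (pmf ω 0 e') ^ (-φ e') ∂Pr :=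
  lintegral_mono fun ω => Finset.single_le_prod'
    (fun e' _ => one_le_ofReal_pmf_rpow_neg ω 0 e' (hφ e'))
    (Finset.mem_erase.mpr ⟨hne, Finset.mem_univ _⟩)

theorem pexpl_not_condE'1_general
    (d : ℕ)
    (Pr : Measure (Env d)) (ε : ℝ) (hPr : IsPexpl Pr ε) :
    (∀ φ : Dir d → ℝ, (∀ e, 0 < φ e) →
      (1 < 2 * ∑ e, φ e - ⨆ e : Dir d, (φ e + φ (e.1, !e.2))) →
      ∃ e₀ : Dir d, ∫⁻ ω, (ENNReal.ofReal (pmf ω 0 e₀)) ^ (-(φ e₀)) ∂Pr = ⊤) ∧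
    ¬ CondE'1 Pr := by
  have infinite_moment : ∀ φ : Dir d → ℝ, (∀ e, 0 < φ e) →
      (1 < 2 * ∑ e, φ e - ⨆ e : Dir d, (φ e + φ (e.1, !e.2))) →
      ∃ e₀ : Dir d, ∫⁻ ω, (ENNReal.ofReal (pmf ω 0 e₀)) ^ (-(φ e₀)) ∂Pr = ⊤ := by
    intro φ hφ h
    obtain ⟨e₀, he₀⟩ := exists_one_div_four_mul_lt_weight φ hφ h
    exact ⟨e₀, hPr.lintegral_rpow_neg_eq_top e₀ he₀.le⟩
  refine ⟨infinite_moment, ?_⟩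
  rintro ⟨φ, hφ, h, hfinite⟩
  obtain ⟨e₀, he₀⟩ := infinite_moment φ hφ h
  have hne : e₀ ≠ (e₀.1, !e₀.2) := by simp [Prod.ext_iff]
  have hle := lintegral_rpow_neg_le_lintegral_prod_erase Pr φ (fun e => (hφ e).le) hne
  exact (hfinite _).not_ge (he₀ ▸ hle)

/-- The environment `𝐏^expl` with `ε ∈ (1/(2d+1), 2d/(2d+1))` does not
satisfy `(E')_1`: for every family of positive weights `φ` with
`2 Σ_e φ(e) - sup_e (φ(e)+φ(-e)) > 1`, there exists a direction `e₀` with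
`𝐄[exp(φ(e₀) log(1/p^ω(0,e₀)))] = 𝐄[p^ω(0,e₀)^{-φ(e₀)}] = ∞`. -/
theorem pexpl_not_condE'1
    (d : ℕ) (hd : 2 ≤ d)
    (Pr : Measure (Env d)) (ε : ℝ) (hPr : IsPexpl Pr ε)
    (hε : 1 / (2 * (d : ℝ) + 1) < ε ∧ ε < 2 * d / (2 * (d : ℝ) + 1)) :
    (∀ φ : Dir d → ℝ, (∀ e, 0 < φ e) →
      (1 < 2 * ∑ e, φ e - ⨆ e : Dir d, (φ e + φ (e.1, !e.2))) →
      ∃ e₀ : Dir d, ∫⁻ ω, (ENNReal.ofReal (pmf ω 0 e₀)) ^ (-(φ e₀)) ∂Pr = ⊤) ∧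
    ¬ CondE'1 Pr :=
  pexpl_not_condE'1_general d Pr ε hPr

end RWRE
end
end

section
/- Let d ≥ 2, let v̂ ∈ S^{d−1} and let e_{i_0} be a canonical unit vector with v̂·e_{i_0} ≥ 1/√d. Let β > 0 and L > 0 and let x_1, x_2 ∈ ℤ^d be such that (x_1 − x_2)·v̂ ≥ 0 and x_2 ∈ B_{β,L}(x_1). Then ‖x_1 − x_2‖_∞ ≤ (1 + √d) L^β. -/
/-!
Put `z = x₂ - x₁` and `c = z i₀ / v̂ i₀`, so that `z = c v̂ + q` with `‖q‖_∞ < L^β`. Since `v̂` is a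
unit vector, `z·v̂ = c + q·v̂`, and Cauchy–Schwarz gives `|q·v̂| ≤ √d ‖q‖_∞`; hence `z·v̂ ≤ 0` forces
`c ≤ √d L^β`. Conversely `z i₀ > -L^β` and `v̂ i₀ ≥ 1/√d` give `c ≥ -√d L^β`. Therefore
`|z i| ≤ |q i| + |c| |v̂ i| ≤ (1 + √d) L^β`.
-/

open Finset

section UnitVector

variable {ι : Type*} [Fintype ι] {v : ι → ℝ}

theorem abs_le_one_of_sum_sq_eq_one (hv : ∑ j, v j ^ 2 = 1) (i : ι) : |v i| ≤ 1 := by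
  rw [← sq_le_one_iff_abs_le_one, ← hv]
  exact single_le_sum (fun j _ => sq_nonneg (v j)) (mem_univ i)

theorem abs_sum_mul_le_sqrt_card_mul (hv : ∑ j, v j ^ 2 = 1) {q : ι → ℝ} {t : ℝ}
    (hq : ∀ j, |q j| ≤ t) : |∑ j, q j * v j| ≤ √(Fintype.card ι) * t := by
  rcases isEmpty_or_nonempty ι with _ | ⟨⟨j₀⟩⟩
  · simp
  have ht : 0 ≤ t := (abs_nonneg _).trans (hq j₀)
  have hq2 : ∑ j, q j ^ 2 ≤ Fintype.card ι * t ^ 2 := by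
    calc ∑ j, q j ^ 2 ≤ ∑ _j : ι, t ^ 2 :=
          sum_le_sum fun j _ => sq_le_sq' (abs_le.mp (hq j)).1 (abs_le.mp (hq j)).2
      _ = Fintype.card ι * t ^ 2 := by simp
  have hcs : (∑ j, q j * v j) ^ 2 ≤ Fintype.card ι * t ^ 2 := by
    calc (∑ j, q j * v j) ^ 2 ≤ (∑ j, q j ^ 2) * ∑ j, v j ^ 2 := sum_mul_sq_le_sq_mul_sq _ _ _
      _ ≤ Fintype.card ι * t ^ 2 := by rwa [hv, mul_one]
  calc |∑ j, q j * v j| ≤ √(Fintype.card ι * t ^ 2) := Real.abs_le_sqrt hcs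
    _ = √(Fintype.card ι) * t := by rw [Real.sqrt_mul' _ (sq_nonneg t), Real.sqrt_sq ht]

theorem le_sqrt_card_mul_of_sum_mul_nonpos (hv : ∑ j, v j ^ 2 = 1) {z : ι → ℝ}
    (hzv : ∑ j, z j * v j ≤ 0) {c t : ℝ} (hq : ∀ j, |z j - c * v j| ≤ t) :
    c ≤ √(Fintype.card ι) * t := by
  have hsplit : ∑ j, z j * v j = ∑ j, (z j - c * v j) * v j + c := by
    simp only [sub_mul, sum_sub_distrib, mul_assoc, ← pow_two, ← mul_sum, hv]
    ring
  have := neg_le_abs (∑ j, (z j - c * v j) * v j)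
  linarith [abs_sum_mul_le_sqrt_card_mul hv hq]

theorem abs_le_one_add_sqrt_card_mul (hv : ∑ j, v j ^ 2 = 1) {i₀ : ι}
    (hvi : 1 / √(Fintype.card ι) ≤ v i₀) {z : ι → ℝ} (hzv : ∑ j, z j * v j ≤ 0) {t : ℝ}
    (hz₀ : -t < z i₀) (hq : ∀ j, |z j - z i₀ / v i₀ * v j| ≤ t) (i : ι) :
    |z i| ≤ (1 + √(Fintype.card ι)) * t := by
  set c := z i₀ / v i₀
  have hsqrt : 0 < √(Fintype.card ι) :=
    Real.sqrt_pos.mpr (Nat.cast_pos.mpr (Fintype.card_pos_iff.mpr ⟨i₀⟩))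
  have hv₀ : 0 < v i₀ := (one_div_pos.mpr hsqrt).trans_le hvi
  have ht : 0 ≤ t := (abs_nonneg _).trans (hq i₀)
  have hupper : c ≤ √(Fintype.card ι) * t := le_sqrt_card_mul_of_sum_mul_nonpos hv hzv hq
  have hlower : -(√(Fintype.card ι) * t) ≤ c := by
    have : 1 ≤ √(Fintype.card ι) * v i₀ := by rwa [div_le_iff₀' hsqrt] at hvi
    rw [le_div_iff₀ hv₀]
    nlinarith
  have hc : |c| ≤ √(Fintype.card ι) * t := abs_le.mpr ⟨hlower, hupper⟩
  calc |z i| = |(z i - c * v i) + c * v i| := by rw [sub_add_cancel]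
    _ ≤ |z i - c * v i| + |c| * |v i| := by rw [← abs_mul]; exact abs_add_le _ _
    _ ≤ t + √(Fintype.card ι) * t * 1 :=
        add_le_add (hq i) (mul_le_mul hc (abs_le_one_of_sum_sq_eq_one hv i) (abs_nonneg _)
          (by positivity))
    _ = (1 + √(Fintype.card ι)) * t := by ring

end UnitVector

theorem tilted_box_geometry_general
    (d : ℕ)
    (vhat : Fin d → ℝ) (hv : ∑ i, vhat i ^ 2 = 1)
    (i₀ : Fin d) (hvi : 1 / Real.sqrt d ≤ vhat i₀)
    (β L : ℝ)
    (x₁ x₂ : Fin d → ℤ)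
    (hdot : 0 ≤ ∑ i, ((x₁ i - x₂ i : ℤ) : ℝ) * vhat i)
    (hbox₁ : -(L ^ β) < ((x₂ i₀ - x₁ i₀ : ℤ) : ℝ) ∧ ((x₂ i₀ - x₁ i₀ : ℤ) : ℝ) < L)
    (hbox₂ : ∀ i : Fin d,
      |((x₂ i - x₁ i : ℤ) : ℝ) - ((x₂ i₀ - x₁ i₀ : ℤ) : ℝ) / vhat i₀ * vhat i| < L ^ β) :
    ∀ i : Fin d, |((x₁ i - x₂ i : ℤ) : ℝ)| ≤ (1 + Real.sqrt d) * L ^ β := by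
  intro i
  have hzv : ∑ j, ((x₂ j - x₁ j : ℤ) : ℝ) * vhat j ≤ 0 := by
    have := neg_nonpos.mpr hdot
    simpa only [← sum_neg_distrib, ← neg_mul, Int.cast_sub, neg_sub] using this
  have key := abs_le_one_add_sqrt_card_mul hv (by simpa using hvi) hzv hbox₁.1
    (fun j => (hbox₂ j).le) i
  rw [Fintype.card_fin] at key
  rwa [Int.cast_sub, abs_sub_comm, ← Int.cast_sub]

/-- Let `v̂ ∈ S^{d-1}` and `e_{i₀}` a canonical unit vector with
`v̂·e_{i₀} ≥ 1/√d`. Writing `P(z) = (z·e_{i₀}/(v̂·e_{i₀})) v̂` for the projection of `z` on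
`v̂` along the hyperplane `{x·e_{i₀} = 0}` and `Q(z) = z - P(z)`, the tilted box is
`B_{β,L}(x) = {y ∈ ℤ^d : -L^β < (y-x)·e_{i₀} < L, ‖Q(y-x)‖_∞ < L^β}`. If
`(x₁-x₂)·v̂ ≥ 0` and `x₂ ∈ B_{β,L}(x₁)` then `‖x₁-x₂‖_∞ ≤ (1+√d)L^β`. -/
theorem tilted_box_geometry
    (d : ℕ) (hd : 2 ≤ d)
    (vhat : Fin d → ℝ) (hv : ∑ i, vhat i ^ 2 = 1)
    (i₀ : Fin d) (hvi : 1 / Real.sqrt d ≤ vhat i₀)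
    (β L : ℝ) (hβ : 0 < β) (hL : 0 < L)
    (x₁ x₂ : Fin d → ℤ)
    (hdot : 0 ≤ ∑ i, ((x₁ i - x₂ i : ℤ) : ℝ) * vhat i)
    (hbox₁ : -(L ^ β) < ((x₂ i₀ - x₁ i₀ : ℤ) : ℝ) ∧ ((x₂ i₀ - x₁ i₀ : ℤ) : ℝ) < L)
    (hbox₂ : ∀ i : Fin d,
      |((x₂ i - x₁ i : ℤ) : ℝ) - ((x₂ i₀ - x₁ i₀ : ℤ) : ℝ) / vhat i₀ * vhat i| < L ^ β) :
    ∀ i : Fin d, |((x₁ i - x₂ i : ℤ) : ℝ)| ≤ (1 + Real.sqrt d) * L ^ β :=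
  tilted_box_geometry_general d vhat hv i₀ hvi β L x₁ x₂ hdot hbox₁ hbox₂
end
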